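/- arXiv:1311.3929 — 3 statements merged into one kernel-verified Lean document; each statement's English description precedes it below -/
import Mathlib

section
/- Let X be a connected simple graph with capacity function c assigning a positive integer to each edge, let A be an m-thin cut and B an n-thin cut, and suppose A and B are not nested. Then there exist A' ∈ {A, A*} and B' ∈ {B, B*} such that A'∩(B')* is an m-thin cut and (A')*∩B' is an n-thin cut. -/
open Classical

/-- The set of edges of `G` with one endpoint in `A` and one in the complement of `A`. -/
def cutEdges {V : Type*} (G : SimpleGraph V) (A : Set V) : Set (Sym2 V) :=
  {e | e ∈ G.edgeSet ∧ ∃ u v, e = s(u, v) ∧ u ∈ A ∧ v ∉ A}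

/-- The capacity of a cut: the sum of the capacities of the edges across it. -/
noncomputable def cutCap {V : Type*} (G : SimpleGraph V) (c : Sym2 V → ℕ) (A : Set V) : ℕ :=
  ∑ᶠ e ∈ cutEdges G A, c e

/-- A cut: a nonempty proper subset of the vertices with finite edge boundary. -/
def IsCut {V : Type*} (G : SimpleGraph V) (A : Set V) : Prop :=
  A ≠ ∅ ∧ A ≠ Set.univ ∧ (cutEdges G A).Finite

/-- Two subsets of `V` are nested if at least one of the four corners is empty. -/
def Nested {V : Type*} (A B : Set V) : Prop :=
  A ∩ B = ∅ ∨ A ∩ Bᶜ = ∅ ∨ Aᶜ ∩ B = ∅ ∨ Aᶜ ∩ Bᶜ = ∅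

/-- Membership in the Boolean subalgebra of `Set V` generated by a family `F`:
the smallest family containing `F`, `∅` and `univ`, closed under union,
intersection and complement. -/
inductive BoolGen {V : Type*} (F : Set (Set V)) : Set V → Prop
  | base {A : Set V} : A ∈ F → BoolGen F A
  | empty : BoolGen F ∅
  | univ : BoolGen F Set.univ
  | union {A B : Set V} : BoolGen F A → BoolGen F B → BoolGen F (A ∪ B)
  | inter {A B : Set V} : BoolGen F A → BoolGen F B → BoolGen F (A ∩ B)
  | compl {A : Set V} : BoolGen F A → BoolGen F Aᶜ

/-- A cut is `n`-thin if it has capacity `n` and does not belong to the Boolean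
subalgebra `B_{n-1}` generated by the cuts of capacity at most `n - 1`. -/
def IsThin {V : Type*} (G : SimpleGraph V) (c : Sym2 V → ℕ) (n : ℕ) (A : Set V) : Prop :=
  IsCut G A ∧ cutCap G c A = n ∧
    ¬ BoolGen {B | IsCut G B ∧ cutCap G c B ≤ n - 1} A

/-!
Write `P = A' ∩ B'ᶜ` and `Q = A'ᶜ ∩ B'` for a choice of sides. Cut capacity is submodular in the
form `c(P) + c(Q) ≤ c(A') + c(B') = m + n`, since every edge leaving `P` or `Q` leaves `A'` or `B'`,
and an edge leaving both runs from `P` to `Q` and so leaves both `A'` and `B'`. If moreover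
`P ∉ B_{m-1}` and `Q ∉ B_{n-1}`, then `c(P) ≥ m` and `c(Q) ≥ n`, so both are equalities and `P`, `Q`
are thin. Such a choice exists: `A ∉ B_{m-1}` forces one of `A ∩ B`, `A ∩ Bᶜ` outside `B_{m-1}`,
likewise for `Aᶜ`, `B`, `Bᶜ`, and the algebras `B_{m-1}` and `B_{n-1}` are comparable.
-/

section Cuts

variable {V : Type*} (G : SimpleGraph V)

lemma mem_cutEdges_iff (S : Set V) (a b : V) :
    s(a, b) ∈ cutEdges G S ↔ s(a, b) ∈ G.edgeSet ∧ (a ∈ S ∧ b ∉ S ∨ b ∈ S ∧ a ∉ S) := by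
  constructor
  · rintro ⟨he, u, v, huv, hu, hv⟩
    refine ⟨he, ?_⟩
    rcases Sym2.eq_iff.mp huv with ⟨rfl, rfl⟩ | ⟨rfl, rfl⟩
    exacts [Or.inl ⟨hu, hv⟩, Or.inr ⟨hu, hv⟩]
  · rintro ⟨he, ⟨ha, hb⟩ | ⟨hb, ha⟩⟩
    exacts [⟨he, a, b, rfl, ha, hb⟩, ⟨he, b, a, Sym2.eq_swap, hb, ha⟩]

lemma cutEdges_compl (S : Set V) : cutEdges G Sᶜ = cutEdges G S := by
  ext e
  induction e using Sym2.inductionOn with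
  | hf a b =>
    simp only [mem_cutEdges_iff, Set.mem_compl_iff, not_not]
    tauto

lemma cutEdges_inter_compl_subset (S T : Set V) :
    cutEdges G (S ∩ Tᶜ) ⊆ cutEdges G S ∪ cutEdges G T := by
  intro e
  induction e using Sym2.inductionOn with
  | hf a b =>
    simp only [mem_cutEdges_iff, Set.mem_union, Set.mem_inter_iff, Set.mem_compl_iff]
    tauto

lemma cutEdges_corners_inter_subset (S T : Set V) :
    cutEdges G (S ∩ Tᶜ) ∩ cutEdges G (Sᶜ ∩ T) ⊆ cutEdges G S ∩ cutEdges G T := by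
  intro e
  induction e using Sym2.inductionOn with
  | hf a b =>
    simp only [mem_cutEdges_iff, Set.mem_inter_iff, Set.mem_compl_iff]
    tauto

lemma cutEdges_corners_union_subset (S T : Set V) :
    cutEdges G (S ∩ Tᶜ) ∪ cutEdges G (Sᶜ ∩ T) ⊆ cutEdges G S ∪ cutEdges G T := by
  refine Set.union_subset (cutEdges_inter_compl_subset G S T) ?_
  rw [Set.inter_comm, Set.union_comm]
  exact cutEdges_inter_compl_subset G T S

variable (c : Sym2 V → ℕ)

lemma cutCap_compl (S : Set V) : cutCap G c Sᶜ = cutCap G c S := by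
  rw [cutCap, cutCap, cutEdges_compl]

lemma finsum_mem_le_finsum_mem_of_subset {α M : Type*} [AddCommMonoid M] [PartialOrder M]
    [CanonicallyOrderedAdd M] (f : α → M) {s t : Set α} (hst : s ⊆ t) (ht : t.Finite) :
    ∑ᶠ i ∈ s, f i ≤ ∑ᶠ i ∈ t, f i := by
  lift t to Finset α using ht
  lift s to Finset α using t.finite_toSet.subset hst
  rw [finsum_mem_coe_finset, finsum_mem_coe_finset]
  exact Finset.sum_le_sum_of_subset (Finset.coe_subset.mp hst)

lemma cutCap_corners_add_le {S T : Set V} (hS : (cutEdges G S).Finite)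
    (hT : (cutEdges G T).Finite) :
    cutCap G c (S ∩ Tᶜ) + cutCap G c (Sᶜ ∩ T) ≤ cutCap G c S + cutCap G c T := by
  have hST := hS.union hT
  have hP := hST.subset (cutEdges_inter_compl_subset G S T)
  have hQ := hST.subset ((Set.subset_union_right).trans (cutEdges_corners_union_subset G S T))
  unfold cutCap
  rw [← finsum_mem_union_inter hP hQ, ← finsum_mem_union_inter hS hT]
  exact add_le_add
    (finsum_mem_le_finsum_mem_of_subset c (cutEdges_corners_union_subset G S T) hST)
    (finsum_mem_le_finsum_mem_of_subset c (cutEdges_corners_inter_subset G S T)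
      (hS.subset Set.inter_subset_left))

end Cuts

section BoolGen

variable {V : Type*} {F F' : Set (Set V)}

lemma BoolGen.mono (hFF' : F ⊆ F') {X : Set V} (hX : BoolGen F X) : BoolGen F' X := by
  induction hX with
  | base h => exact .base (hFF' h)
  | empty => exact .empty
  | univ => exact .univ
  | union _ _ ih₁ ih₂ => exact ih₁.union ih₂
  | inter _ _ ih₁ ih₂ => exact ih₁.inter ih₂
  | compl _ ih => exact ih.compl

lemma BoolGen.compl_iff {X : Set V} : BoolGen F Xᶜ ↔ BoolGen F X :=
  ⟨fun h => compl_compl X ▸ h.compl, .compl⟩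

lemma BoolGen.not_inter_or_not_inter_compl {X : Set V} (hX : ¬BoolGen F X) (Y : Set V) :
    ¬BoolGen F (X ∩ Y) ∨ ¬BoolGen F (X ∩ Yᶜ) := by
  by_contra! h
  exact hX (Set.inter_union_compl X Y ▸ h.1.union h.2)

lemma exists_corners_not_boolGen_of_subset (hFF' : F ⊆ F') {A B : Set V}
    (hA : ¬BoolGen F A) (hB : ¬BoolGen F' B) :
    ∃ S ∈ ({A, Aᶜ} : Set (Set V)), ∃ T ∈ ({B, Bᶜ} : Set (Set V)),
      ¬BoolGen F (S ∩ Tᶜ) ∧ ¬BoolGen F' (Sᶜ ∩ T) := by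
  have hmono {X : Set V} : ¬BoolGen F' X → ¬BoolGen F X := mt (BoolGen.mono hFF')
  have hB₁ := BoolGen.not_inter_or_not_inter_compl hB A
  have hB₂ := BoolGen.not_inter_or_not_inter_compl (BoolGen.compl_iff.not.mpr hB) A
  rw [Set.inter_comm B, Set.inter_comm B Aᶜ] at hB₁
  rw [Set.inter_comm Bᶜ, Set.inter_comm Bᶜ Aᶜ] at hB₂
  -- Each `B`-column has a corner outside `BoolGen F'`. If these two corners are opposite we are
  -- done, as `F ⊆ F'`; otherwise they share an `A`-row, and the corner outside `BoolGen F` in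
  -- the other row is opposite one of them.
  rcases hB₁ with hAB | hAcB <;> rcases hB₂ with hABc | hAcBc
  · rcases BoolGen.not_inter_or_not_inter_compl (BoolGen.compl_iff.not.mpr hA) B with h | h
    · exact ⟨Aᶜ, by simp, Bᶜ, by simp, by simpa using h, by simpa using hABc⟩
    · exact ⟨Aᶜ, by simp, B, by simp, h, by simpa using hAB⟩
  · exact ⟨A, by simp, Bᶜ, by simp, by simpa using hmono hAB, hAcBc⟩
  · exact ⟨Aᶜ, by simp, Bᶜ, by simp, by simpa using hmono hAcB, by simpa using hABc⟩
  · rcases BoolGen.not_inter_or_not_inter_compl hA B with h | h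
    · exact ⟨A, by simp, Bᶜ, by simp, by simpa using h, hAcBc⟩
    · exact ⟨A, by simp, B, by simp, h, hAcB⟩

lemma exists_corners_not_boolGen (hFF' : F ⊆ F' ∨ F' ⊆ F) {A B : Set V}
    (hA : ¬BoolGen F A) (hB : ¬BoolGen F' B) :
    ∃ S ∈ ({A, Aᶜ} : Set (Set V)), ∃ T ∈ ({B, Bᶜ} : Set (Set V)),
      ¬BoolGen F (S ∩ Tᶜ) ∧ ¬BoolGen F' (Sᶜ ∩ T) := by
  rcases hFF' with hle | hle
  · exact exists_corners_not_boolGen_of_subset hle hA hB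
  · obtain ⟨T, hT, S, hS, hQ, hP⟩ := exists_corners_not_boolGen_of_subset hle hB hA
    exact ⟨S, hS, T, hT, by rwa [Set.inter_comm], by rwa [Set.inter_comm]⟩

end BoolGen

section Thin

variable {V : Type*} {G : SimpleGraph V} {c : Sym2 V → ℕ}

-- `BoolGen (cutsOfCapLE G c (n - 1))` is the algebra `B_{n-1}`.
def cutsOfCapLE (G : SimpleGraph V) (c : Sym2 V → ℕ) (k : ℕ) : Set (Set V) :=
  {B | IsCut G B ∧ cutCap G c B ≤ k}

lemma cutsOfCapLE_mono {k l : ℕ} (hkl : k ≤ l) : cutsOfCapLE G c k ⊆ cutsOfCapLE G c l :=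
  fun _ ⟨hX, hXk⟩ => ⟨hX, hXk.trans hkl⟩

lemma IsThin.compl {n : ℕ} {A : Set V} (hA : IsThin G c n A) : IsThin G c n Aᶜ := by
  obtain ⟨⟨hne, hnu, hfin⟩, hcap, hA⟩ := hA
  refine ⟨⟨?_, ?_, cutEdges_compl G A ▸ hfin⟩, cutCap_compl G c A ▸ hcap,
    BoolGen.compl_iff.not.mpr hA⟩
  · rwa [Ne, Set.compl_empty_iff]
  · rwa [Ne, Set.compl_univ_iff]

lemma isCut_of_not_boolGen {F : Set (Set V)} {X : Set V} (hX : ¬BoolGen F X)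
    (hfin : (cutEdges G X).Finite) : IsCut G X :=
  ⟨fun h => hX (h ▸ .empty), fun h => hX (h ▸ .univ), hfin⟩

lemma le_cutCap_of_not_boolGen {n : ℕ} {X : Set V} (hX : ¬BoolGen (cutsOfCapLE G c (n - 1)) X)
    (hfin : (cutEdges G X).Finite) : n ≤ cutCap G c X := by
  by_contra! hlt
  exact hX (.base ⟨isCut_of_not_boolGen hX hfin, Nat.le_sub_one_of_lt hlt⟩)

lemma isThin_of_not_boolGen {n : ℕ} {X : Set V} (hX : ¬BoolGen (cutsOfCapLE G c (n - 1)) X)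
    (hfin : (cutEdges G X).Finite) (hcap : cutCap G c X ≤ n) : IsThin G c n X :=
  ⟨isCut_of_not_boolGen hX hfin, le_antisymm hcap (le_cutCap_of_not_boolGen hX hfin), hX⟩

lemma isThin_corners_of_not_boolGen {m n : ℕ} {S T : Set V}
    (hS : (cutEdges G S).Finite) (hT : (cutEdges G T).Finite)
    (hcap : cutCap G c S + cutCap G c T ≤ m + n)
    (hP : ¬BoolGen (cutsOfCapLE G c (m - 1)) (S ∩ Tᶜ))
    (hQ : ¬BoolGen (cutsOfCapLE G c (n - 1)) (Sᶜ ∩ T)) :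
    IsThin G c m (S ∩ Tᶜ) ∧ IsThin G c n (Sᶜ ∩ T) := by
  have hfin := (hS.union hT).subset (cutEdges_corners_union_subset G S T)
  have hPfin := hfin.subset Set.subset_union_left
  have hQfin := hfin.subset Set.subset_union_right
  have hsub := cutCap_corners_add_le G c hS hT
  have hPm := le_cutCap_of_not_boolGen hP hPfin
  have hQn := le_cutCap_of_not_boolGen hQ hQfin
  exact ⟨isThin_of_not_boolGen hP hPfin (by omega), isThin_of_not_boolGen hQ hQfin (by omega)⟩

end Thin

theorem thin_crossing_general {V : Type*} (G : SimpleGraph V) (c : Sym2 V → ℕ) (m n : ℕ) (A B : Set V)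
    (hA : IsThin G c m A) (hB : IsThin G c n B) :
    ∃ A' ∈ ({A, Aᶜ} : Set (Set V)), ∃ B' ∈ ({B, Bᶜ} : Set (Set V)),
      IsThin G c m (A' ∩ B'ᶜ) ∧ IsThin G c n (A'ᶜ ∩ B') := by
  obtain ⟨S, hS, T, hT, hP, hQ⟩ := exists_corners_not_boolGen
    ((le_total (m - 1) (n - 1)).imp cutsOfCapLE_mono cutsOfCapLE_mono) hA.2.2 hB.2.2
  have hS' : IsThin G c m S := by rcases hS with rfl | rfl; exacts [hA, hA.compl]
  have hT' : IsThin G c n T := by rcases hT with rfl | rfl; exacts [hB, hB.compl]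
  refine ⟨S, hS, T, hT, isThin_corners_of_not_boolGen hS'.1.2.2 hT'.1.2.2 ?_ hP hQ⟩
  rw [hS'.2.1, hT'.2.1]

/-- If `A` is an `m`-thin cut and `B` an `n`-thin cut which are not nested, then after
replacing `A` by `Aᶜ` and/or `B` by `Bᶜ` if necessary, `A ∩ Bᶜ` is `m`-thin and
`Aᶜ ∩ B` is `n`-thin. -/
theorem thin_crossing {V : Type*} (G : SimpleGraph V) (hG : G.Connected)
    (c : Sym2 V → ℕ) (hc : ∀ e ∈ G.edgeSet, 0 < c e)
    (m n : ℕ) (A B : Set V)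
    (hA : IsThin G c m A) (hB : IsThin G c n B) (hAB : ¬ Nested A B) :
    ∃ A' ∈ ({A, Aᶜ} : Set (Set V)), ∃ B' ∈ ({B, Bᶜ} : Set (Set V)),
      IsThin G c m (A' ∩ B'ᶜ) ∧ IsThin G c n (A'ᶜ ∩ B') :=
  thin_crossing_general G c m n A B hA hB
end

section
/- Let X be a connected simple graph, let e be an edge of X, and let k ≥ 1. Then there are only finitely many tight cuts A with |δA| = k and e ∈ δA. -/
open Classical

/-- A tight cut: both the subgraph induced on `A` and that induced on `Aᶜ` are connected. -/
def IsTight {V : Type*} (G : SimpleGraph V) (A : Set V) : Prop :=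
  IsCut G A ∧ (G.induce A).Connected ∧ (G.induce Aᶜ).Connected

/-!
Let `e = uv` lie in `δA` for a tight cut `A`, say `u ∈ A`. Since both sides of `A` are
connected, `δA` is an inclusion-minimal set of edges separating `u` from `v`, and `A` is
recovered from it as the set of vertices reachable from `u` in `G - δA`. So it suffices that
there are only finitely many minimal `u`-`v` edge cuts of size at most `k`. Such a cut meets a
fixed `u`-`v` path in one of its finitely many edges `f`, and removing `f` from it leaves a
minimal `u`-`v` cut of size at most `k - 1` in `G - f`; induct on `k`.
-/

namespace SimpleGraph

variable {V : Type*} {G : SimpleGraph V}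

def IsMinimalEdgeCut (G : SimpleGraph V) (S : Set (Sym2 V)) (u v : V) : Prop :=
  ¬(G.deleteEdges S).Reachable u v ∧ ∀ T ⊂ S, (G.deleteEdges T).Reachable u v

theorem Reachable.deleteEdges_of_induce {B : Set V} {T : Set (Sym2 V)}
    (hT : ∀ a ∈ B, ∀ b ∈ B, s(a, b) ∉ T) {x y : B} (h : (G.induce B).Reachable x y) :
    (G.deleteEdges T).Reachable x y :=
  h.map
    { toFun := Subtype.val
      map_rel' := fun {a b} hab => (deleteEdges_adj ..).mpr ⟨hab, hT a a.2 b b.2⟩ }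

namespace IsMinimalEdgeCut

variable {S : Set (Sym2 V)} {u v : V}

theorem symm (h : G.IsMinimalEdgeCut S u v) : G.IsMinimalEdgeCut S v u :=
  ⟨fun hr => h.1 hr.symm, fun T hT => (h.2 T hT).symm⟩

theorem eq_empty_of_not_reachable (h : G.IsMinimalEdgeCut S u v) (huv : ¬G.Reachable u v) :
    S = ∅ := by
  by_contra hS
  have := h.2 ∅ (Set.empty_ssubset.mpr (Set.nonempty_iff_ne_empty.mpr hS))
  rw [deleteEdges_empty] at this
  exact huv this

theorem deleteEdges_singleton (h : G.IsMinimalEdgeCut S u v) {f : Sym2 V} (hf : f ∈ S) :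
    (G.deleteEdges {f}).IsMinimalEdgeCut (S \ {f}) u v := by
  refine ⟨?_, fun T hT => ?_⟩
  · rw [deleteEdges_deleteEdges, Set.union_sdiff_cancel (Set.singleton_subset_iff.mpr hf)]
    exact h.1
  · rw [deleteEdges_deleteEdges, ← Set.insert_eq]
    refine h.2 _ ⟨Set.insert_subset hf (hT.subset.trans Set.sdiff_subset), fun hS => ?_⟩
    obtain ⟨x, ⟨hxS, hxf⟩, hxT⟩ := Set.exists_of_ssubset hT
    exact (hS hxS).elim hxf hxT

end IsMinimalEdgeCut

theorem finite_setOf_isMinimalEdgeCut (m : ℕ) (G : SimpleGraph V) (u v : V) :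
    {S : Set (Sym2 V) | S.Finite ∧ S.ncard ≤ m ∧ G.IsMinimalEdgeCut S u v}.Finite := by
  induction m generalizing G with
  | zero =>
    refine (Set.finite_singleton ∅).subset fun S ⟨hS, hcard, _⟩ => ?_
    exact (Set.ncard_eq_zero hS).mp (Nat.le_zero.mp hcard)
  | succ m ih =>
    by_cases huv : G.Reachable u v
    · obtain ⟨p⟩ := huv
      refine (p.edges.finite_toSet.biUnion fun f _ =>
        (ih (G.deleteEdges {f})).image (insert f)).subset ?_
      rintro S ⟨hS, hcard, hcut⟩
      obtain ⟨f, hfS, hfp⟩ := p.exists_mem_edges_of_not_reachable_deleteEdges hcut.1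
      have hcard' := Set.ncard_sdiff_singleton_add_one hfS hS
      refine Set.mem_biUnion hfp
        ⟨S \ {f}, ⟨hS.sdiff, by omega, hcut.deleteEdges_singleton hfS⟩, ?_⟩
      rw [Set.insert_sdiff_singleton, Set.insert_eq_of_mem hfS]
    · exact (Set.finite_singleton ∅).subset fun S hS => hS.2.2.eq_empty_of_not_reachable huv

end SimpleGraph

open SimpleGraph

section TightCut

variable {V : Type*} {G : SimpleGraph V} {A : Set V} {a b : V}

theorem mem_and_notMem_of_mk_mem_cutEdges (h : s(a, b) ∈ cutEdges G A) :
    a ∈ A ∧ b ∉ A ∨ b ∈ A ∧ a ∉ A := by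
  obtain ⟨-, u, v, huv, hu, hv⟩ := h
  rcases Sym2.eq_iff.mp huv with ⟨rfl, rfl⟩ | ⟨rfl, rfl⟩
  exacts [Or.inl ⟨hu, hv⟩, Or.inr ⟨hu, hv⟩]

theorem mk_notMem_cutEdges_of_mem (ha : a ∈ A) (hb : b ∈ A) : s(a, b) ∉ cutEdges G A := by
  intro h
  rcases mem_and_notMem_of_mk_mem_cutEdges h with ⟨-, h⟩ | ⟨-, h⟩ <;> contradiction

theorem mk_notMem_cutEdges_of_notMem (ha : a ∉ A) (hb : b ∉ A) : s(a, b) ∉ cutEdges G A := by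
  intro h
  rcases mem_and_notMem_of_mk_mem_cutEdges h with ⟨h, -⟩ | ⟨h, -⟩ <;> contradiction

theorem mem_of_reachable_deleteEdges_cutEdges (h : (G.deleteEdges (cutEdges G A)).Reachable a b)
    (ha : a ∈ A) : b ∈ A := by
  obtain ⟨p⟩ := h
  induction p with
  | nil => exact ha
  | cons hadj _ ih =>
    rw [deleteEdges_adj] at hadj
    by_contra hc
    exact hadj.2 ⟨G.mem_edgeSet.mpr hadj.1, _, _, rfl, ha, fun h => hc (ih h)⟩

theorem eq_setOf_reachable_deleteEdges_cutEdges (hA : (G.induce A).Connected) (ha : a ∈ A) :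
    A = {w | (G.deleteEdges (cutEdges G A)).Reachable a w} := by
  ext w
  refine ⟨fun hw => ?_, fun hr => mem_of_reachable_deleteEdges_cutEdges hr ha⟩
  exact (hA.preconnected ⟨a, ha⟩ ⟨w, hw⟩).deleteEdges_of_induce
    fun _ hc _ hd => mk_notMem_cutEdges_of_mem hc hd

theorem isMinimalEdgeCut_cutEdges (hA : (G.induce A).Connected) (hAc : (G.induce Aᶜ).Connected)
    (ha : a ∈ A) (hb : b ∉ A) : G.IsMinimalEdgeCut (cutEdges G A) a b := by
  refine ⟨fun hr => hb (mem_of_reachable_deleteEdges_cutEdges hr ha), fun T hT => ?_⟩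
  obtain ⟨f, ⟨hf, x, y, rfl, hx, hy⟩, hfT⟩ := Set.exists_of_ssubset hT
  have hax : (G.deleteEdges T).Reachable a x :=
    (hA.preconnected ⟨a, ha⟩ ⟨x, hx⟩).deleteEdges_of_induce
      fun _ hc _ hd h => mk_notMem_cutEdges_of_mem hc hd (hT.subset h)
  have hyb : (G.deleteEdges T).Reachable y b :=
    (hAc.preconnected ⟨y, hy⟩ ⟨b, hb⟩).deleteEdges_of_induce
      fun _ hc _ hd h => mk_notMem_cutEdges_of_notMem hc hd (hT.subset h)
  exact (hax.trans ((deleteEdges_adj ..).mpr ⟨hf, hfT⟩).reachable).trans hyb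

end TightCut

theorem finitely_many_tight_cuts_general {V : Type*} (G : SimpleGraph V)
    (e : Sym2 V) (k : ℕ) :
    {A : Set V | IsTight G A ∧ (cutEdges G A).ncard = k ∧ e ∈ cutEdges G A}.Finite := by
  induction e using Sym2.ind with
  | _ u v =>
  let side (S : Set (Sym2 V)) (w : V) : Set V := {z | (G.deleteEdges S).Reachable w z}
  refine ((finite_setOf_isMinimalEdgeCut k G u v).biUnion fun S _ =>
    Set.toFinite {side S u, side S v}).subset ?_
  rintro A ⟨⟨⟨-, -, hfin⟩, hA, hAc⟩, hcard, huv⟩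
  rcases mem_and_notMem_of_mk_mem_cutEdges huv with ⟨hu, hv⟩ | ⟨hv, hu⟩
  · exact Set.mem_biUnion ⟨hfin, hcard.le, isMinimalEdgeCut_cutEdges hA hAc hu hv⟩
      (Or.inl (eq_setOf_reachable_deleteEdges_cutEdges hA hu))
  · exact Set.mem_biUnion ⟨hfin, hcard.le, (isMinimalEdgeCut_cutEdges hA hAc hv hu).symm⟩
      (Or.inr (eq_setOf_reachable_deleteEdges_cutEdges hA hv))

/-- For every edge `e` and every `k ≥ 1` there are only finitely many tight cuts `A`
with `|δA| = k` and `e ∈ δA`. -/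
theorem finitely_many_tight_cuts {V : Type*} (G : SimpleGraph V) (hG : G.Connected)
    (e : Sym2 V) (he : e ∈ G.edgeSet) (k : ℕ) (hk : 1 ≤ k) :
    {A : Set V | IsTight G A ∧ (cutEdges G A).ncard = k ∧ e ∈ cutEdges G A}.Finite :=
  finitely_many_tight_cuts_general G e k
end

section
/- Let X be a connected simple graph with capacity function c assigning a positive integer to each edge, let n ≥ 1, and let C ⊆ D be subsets of the vertex set with C ≠ ∅, D not equal to the whole vertex set, and δC and δD finite. Then the set of tight cuts E with c(E) ≤ n and C ⊆ E ⊆ D is finite. -/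
/-!
Induct on the capacity bound. Any cut containing `v` but not `w` is crossed by a dart `(x, y)` of a
fixed walk from `v` to `w`, so it suffices to bound the tight cuts separating the ends of one edge
`xy`. If `xy` is a bridge, the only such tight cut is the component of `x` in `G - xy`. Otherwise
`G - xy` is still connected, and every such cut stays tight in `G - xy` while its capacity drops by
`c(xy) ≥ 1`, so the induction hypothesis applies.
-/

open Classical

namespace SimpleGraph

variable {V : Type*} {G : SimpleGraph V}

def separatingTightCuts (G : SimpleGraph V) (c : Sym2 V → ℕ) (n : ℕ) (v w : V) : Set (Set V) :=
  {E | IsTight G E ∧ cutCap G c E < n ∧ v ∈ E ∧ w ∉ E}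

lemma cutEdges_deleteEdges (s : Set (Sym2 V)) (A : Set V) :
    cutEdges (G.deleteEdges s) A = cutEdges G A \ s := by
  ext e
  simp only [cutEdges, Set.mem_ofPred_eq, edgeSet_deleteEdges, Set.mem_sdiff]
  tauto

lemma cutCap_eq_cutCap_deleteEdges_add {c : Sym2 V → ℕ} {A : Set V} {e : Sym2 V}
    (hfin : (cutEdges G A).Finite) (he : e ∈ cutEdges G A) :
    cutCap G c A = cutCap (G.deleteEdges {e}) c A + c e := by
  have hA : cutEdges G A = insert e (cutEdges G A \ {e}) := by
    rw [Set.insert_sdiff_singleton, Set.insert_eq_of_mem he]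
  rw [cutCap, cutCap, cutEdges_deleteEdges, add_comm]
  conv_lhs => rw [hA]
  exact finsum_mem_insert _ (fun h => h.2 rfl) hfin.sdiff

lemma induce_deleteEdges_singleton_of_notMem {A : Set V} {x y : V} (hy : y ∉ A) :
    (G.deleteEdges {s(x, y)}).induce A = G.induce A := by
  ext ⟨u, hu⟩ ⟨v, hv⟩
  simp only [comap_adj, Function.Embedding.coe_subtype, deleteEdges_adj, Set.mem_singleton_iff,
    and_iff_left_iff_imp]
  rintro - huv
  rcases Sym2.eq_iff.mp huv with ⟨-, rfl⟩ | ⟨rfl, -⟩ <;> contradiction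

lemma IsTight.deleteEdges_singleton {E : Set V} {x y : V} (hE : IsTight G E) (hx : x ∈ E)
    (hy : y ∉ E) : IsTight (G.deleteEdges {s(x, y)}) E := by
  obtain ⟨⟨hne, hnu, hfin⟩, hconn, hconnc⟩ := hE
  refine ⟨⟨hne, hnu, ?_⟩, ?_, ?_⟩
  · rw [cutEdges_deleteEdges]
    exact hfin.sdiff
  · rwa [induce_deleteEdges_singleton_of_notMem hy]
  · rwa [Sym2.eq_swap, induce_deleteEdges_singleton_of_notMem (not_not.mpr hx)]

lemma IsTight.eq_setOf_reachable {E : Set V} {x y : V} (hE : IsTight G E) (hx : x ∈ E)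
    (hy : y ∉ E) (hxy : ¬ G.Reachable x y) : E = {v | G.Reachable x v} := by
  ext v
  constructor
  · intro hv
    exact (hE.2.1.preconnected ⟨x, hx⟩ ⟨v, hv⟩).map (Embedding.induce E).toHom
  · intro hxv
    by_contra hv
    have hyv := (hE.2.2.preconnected ⟨y, hy⟩ ⟨v, hv⟩).map (Embedding.induce Eᶜ).toHom
    exact hxy (hxv.trans hyv.symm)

lemma separatingTightCuts_subset_biUnion_darts (c : Sym2 V → ℕ) (n : ℕ) {v w : V}
    (p : G.Walk v w) :
    separatingTightCuts G c n v w ⊆ ⋃ d ∈ p.darts, separatingTightCuts G c n d.fst d.snd := by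
  rintro E ⟨hE, hcap, hv, hw⟩
  obtain ⟨d, hd, hx, hy⟩ := p.exists_boundary_dart E hv hw
  exact Set.mem_biUnion hd ⟨hE, hcap, hx, hy⟩

lemma separatingTightCuts_subset_singleton_of_isBridge (c : Sym2 V → ℕ) (n : ℕ) {x y : V}
    (hb : G.IsBridge s(x, y)) :
    separatingTightCuts G c n x y ⊆ {{v | (G.deleteEdges {s(x, y)}).Reachable x v}} :=
  fun _ ⟨hE, _, hx, hy⟩ =>
    IsTight.eq_setOf_reachable (IsTight.deleteEdges_singleton hE hx hy) hx hy hb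

lemma separatingTightCuts_succ_subset_deleteEdges {c : Sym2 V → ℕ}
    (hc : ∀ e ∈ G.edgeSet, 0 < c e) (n : ℕ) {x y : V} (hxy : G.Adj x y) :
    separatingTightCuts G c (n + 1) x y ⊆
      separatingTightCuts (G.deleteEdges {s(x, y)}) c n x y := by
  rintro E ⟨hE, hcap, hx, hy⟩
  have hcross : s(x, y) ∈ cutEdges G E := ⟨hxy, x, y, rfl, hx, hy⟩
  have hpos := hc _ (G.mem_edgeSet.mpr hxy)
  rw [cutCap_eq_cutCap_deleteEdges_add hE.1.2.2 hcross] at hcap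
  exact ⟨IsTight.deleteEdges_singleton hE hx hy, by omega, hx, hy⟩

theorem separatingTightCuts_finite (n : ℕ) :
    ∀ {G : SimpleGraph V}, G.Connected → ∀ {c : Sym2 V → ℕ}, (∀ e ∈ G.edgeSet, 0 < c e) →
      ∀ v w : V, (separatingTightCuts G c n v w).Finite := by
  induction n with
  | zero => simp [separatingTightCuts]
  | succ n ih =>
    intro G hG c hc v w
    obtain ⟨p⟩ := hG.preconnected v w
    refine .subset (p.darts.finite_toSet.biUnion fun d _ => ?_)
      (separatingTightCuts_subset_biUnion_darts c _ p)
    obtain ⟨⟨x, y⟩, hxy⟩ := d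
    by_cases hb : G.IsBridge s(x, y)
    · exact (Set.finite_singleton _).subset
        (separatingTightCuts_subset_singleton_of_isBridge c _ hb)
    · have hc' : ∀ e ∈ (G.deleteEdges {s(x, y)}).edgeSet, 0 < c e := fun e he =>
        hc e (edgeSet_mono (deleteEdges_le _) he)
      exact (ih (hG.connected_delete_edge_of_not_isBridge hb) hc' x y).subset
        (separatingTightCuts_succ_subset_deleteEdges hc n hxy)

end SimpleGraph

theorem finitely_many_tight_cuts_between_general {V : Type*} (G : SimpleGraph V) (hG : G.Connected)
    (c : Sym2 V → ℕ) (hc : ∀ e ∈ G.edgeSet, 0 < c e) (n : ℕ)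
    (C D : Set V) (hC : C ≠ ∅) (hD : D ≠ Set.univ) :
    {E : Set V | IsTight G E ∧ cutCap G c E ≤ n ∧ C ⊆ E ∧ E ⊆ D}.Finite := by
  obtain ⟨v, hv⟩ := Set.nonempty_iff_ne_empty.mpr hC
  obtain ⟨w, hw⟩ := (Set.ne_univ_iff_exists_notMem D).mp hD
  refine (G.separatingTightCuts_finite (n + 1) hG hc v w).subset ?_
  rintro E ⟨hE, hcap, hCE, hED⟩
  exact ⟨hE, Nat.lt_succ_of_le hcap, hCE hv, fun hwE => hw (hED hwE)⟩

/-- The finite interval condition: if `C ⊆ D`, `C ≠ ∅`, `D ≠ univ` and both have finite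
edge boundary, then there are only finitely many tight cuts `E` of capacity at most `n`
with `C ⊆ E ⊆ D`. -/
theorem finitely_many_tight_cuts_between {V : Type*} (G : SimpleGraph V) (hG : G.Connected)
    (c : Sym2 V → ℕ) (hc : ∀ e ∈ G.edgeSet, 0 < c e) (n : ℕ) (hn : 1 ≤ n)
    (C D : Set V) (hCD : C ⊆ D) (hC : C ≠ ∅) (hD : D ≠ Set.univ)
    (hfC : (cutEdges G C).Finite) (hfD : (cutEdges G D).Finite) :
    {E : Set V | IsTight G E ∧ cutCap G c E ≤ n ∧ C ⊆ E ∧ E ⊆ D}.Finite :=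
  finitely_many_tight_cuts_between_general G hG c hc n C D hC hD
end
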